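/- arXiv:2509.22446 — 2 statements merged into one kernel-verified Lean document; each statement's English description precedes it below -/
import Mathlib

section
/- For any real numbers a, b, c and target θ, |a + b − clip(c, min(a,b), max(a,b)) − θ| ≤ max(|a − θ|, |b − θ|). -/
/-! The clipped correction lies in `[min a b, max a b]`, so its reflection `a + b - clip …` about
the midpoint of that interval lies there too; and on an interval, the distance to `θ` is
maximised at an endpoint. -/

noncomputable def clip (x y z : ℝ) : ℝ := max y (min x z)

theorem clip_mem_Icc (x : ℝ) {y z : ℝ} (h : y ≤ z) : clip x y z ∈ Set.Icc y z :=
  ⟨le_max_left _ _, max_le h (min_le_right _ _)⟩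

section OrderedGroup

variable {G : Type*} [AddCommGroup G] [LinearOrder G]

theorem max_abs_sub_min_max (a b θ : G) :
    max |min a b - θ| |max a b - θ| = max |a - θ| |b - θ| := by
  rcases le_total a b with h | h
  · rw [min_eq_left h, max_eq_right h]
  · rw [min_eq_right h, max_eq_left h, max_comm]

variable [IsOrderedAddMonoid G]

theorem add_sub_mem_Icc_of_mem_Icc {m M x : G} (hx : x ∈ Set.Icc m M) :
    m + M - x ∈ Set.Icc m M :=
  Set.sub_mem_Icc_iff_left.mpr
    ⟨add_le_add_right hx.2 m, (add_comm m M).trans_le (add_le_add_right hx.1 M)⟩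

theorem abs_sub_le_max_of_mem_Icc {m M x : G} (θ : G) (hx : x ∈ Set.Icc m M) :
    |x - θ| ≤ max |m - θ| |M - θ| :=
  abs_le_max_abs_abs (sub_le_sub_right hx.1 θ) (sub_le_sub_right hx.2 θ)

end OrderedGroup

theorem acc_error_le_max (a b c θ : ℝ) :
    |a + b - clip c (min a b) (max a b) - θ| ≤ max (|a - θ|) (|b - θ|) := by
  have hclip := clip_mem_Icc c (min_le_max : min a b ≤ max a b)
  have hreflect := add_sub_mem_Icc_of_mem_Icc hclip
  rw [min_add_max] at hreflect
  calc |a + b - clip c (min a b) (max a b) - θ|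
      ≤ max |min a b - θ| |max a b - θ| := abs_sub_le_max_of_mem_Icc θ hreflect
    _ = max |a - θ| |b - θ| := max_abs_sub_min_max a b θ
end

section
/- For real numbers a, b, c with a ≠ b and θ ∈ ℝ, setting λ = (a − clip(c, min(a,b), max(a,b)))/(a − b), we have λ ∈ [0,1] and |a + b − clip(c, min(a,b), max(a,b)) − θ| ≤ λ·|a − θ| + (1−λ)·|b − θ|. -/
/-! The clipped value `m` lies between `a` and `b`, so `λ = (a - m) / (a - b) ∈ [0, 1]`, and the
reflected point is the convex combination `a + b - m = λ a + (1 - λ) b`. The bound is then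
convexity of `x ↦ |x - θ|`. -/

open Set

lemma clip_mem_uIcc (c a b : ℝ) : clip c (min a b) (max a b) ∈ uIcc a b :=
  ⟨le_max_left _ _, max_le min_le_max (min_le_right _ _)⟩

lemma sub_div_sub_mem_Icc_of_mem_uIcc {a b m : ℝ} (hm : m ∈ uIcc a b) :
    (a - m) / (a - b) ∈ Icc (0 : ℝ) 1 := by
  rcases le_total a b with h | h
  · rw [uIcc_of_le h] at hm
    rw [← neg_div_neg_eq, neg_sub, neg_sub]
    exact ⟨div_nonneg (by linarith [hm.1]) (by linarith),
      div_le_one_of_le₀ (by linarith [hm.2]) (by linarith)⟩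
  · rw [uIcc_of_ge h] at hm
    exact ⟨div_nonneg (by linarith [hm.2]) (by linarith),
      div_le_one_of_le₀ (by linarith [hm.1]) (by linarith)⟩

lemma add_sub_eq_convex_comb {a b : ℝ} (hab : a ≠ b) (m : ℝ) :
    a + b - m = (a - m) / (a - b) * a + (1 - (a - m) / (a - b)) * b := by
  field_simp [sub_ne_zero.mpr hab]
  ring

lemma ConvexOn.le_of_reflect_mem_uIcc {s : Set ℝ} {f : ℝ → ℝ} (hf : ConvexOn ℝ s f)
    {a b m : ℝ} (ha : a ∈ s) (hb : b ∈ s) (hab : a ≠ b) (hm : m ∈ uIcc a b) :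
    f (a + b - m) ≤ (a - m) / (a - b) * f a + (1 - (a - m) / (a - b)) * f b := by
  obtain ⟨h0, h1⟩ := sub_div_sub_mem_Icc_of_mem_uIcc hm
  rw [add_sub_eq_convex_comb hab]
  exact hf.2 ha hb h0 (sub_nonneg.mpr h1) (add_sub_cancel _ _)

theorem acc_error_convex_bound (a b c θ : ℝ) (hab : a ≠ b) :
    (a - clip c (min a b) (max a b)) / (a - b) ∈ Set.Icc (0 : ℝ) 1 ∧
    |a + b - clip c (min a b) (max a b) - θ| ≤
      ((a - clip c (min a b) (max a b)) / (a - b)) * |a - θ| +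
      (1 - (a - clip c (min a b) (max a b)) / (a - b)) * |b - θ| := by
  have hm := clip_mem_uIcc c a b
  refine ⟨sub_div_sub_mem_Icc_of_mem_uIcc hm, ?_⟩
  simpa only [Real.dist_eq] using
    (convexOn_univ_dist θ).le_of_reflect_mem_uIcc (mem_univ a) (mem_univ b) hab hm
end
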